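/- Let B = 1 + i√12 = 1 + 2√3·i ∈ ℤ[ω₃] (expressed as an Eisenstein integer, since i√3 = 2ω₆ − 1 gives B = 2(2ω₆−1)+1 = 4ω₆ − 1). Then N(B) = 13 and D = {0, ±1, ±2, ±ω₆, ±2ω₆, ±ω₃, ±2ω₃} is a complete residue system modulo B in ℤ[ω₃]. -/

import Mathlib

/-!
Reduction modulo 13 with `ω₃ ↦ 9` is a ring homomorphism `ℤ[ω₃] → ZMod 13` (as `9² + 9 + 1 = 91`)
whose kernel is the principal ideal generated by `3 + 4ω₃` (as `3 + 4·9 = 39`, and the norm is 13).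
So `x + yω₃` and `a + bω₃` are congruent modulo `3 + 4ω₃` exactly when `x + 9y ≡ a + 9b (mod 13)`,
and the thirteen digits reduce to the thirteen distinct residues.
-/

/-- ω₃ = (−1 + i√3)/2, a primitive cube root of unity. -/
noncomputable def ω3 : ℂ := (-1 + Real.sqrt 3 * Complex.I) / 2

/-- ω₆ = (1 + i√3)/2 = 1 + ω₃, a primitive sixth root of unity. -/
noncomputable def ω6 : ℂ := 1 + ω3

/-- The Eisenstein integers, as a subset of ℂ. -/
def IsEisenstein (z : ℂ) : Prop := ∃ x y : ℤ, z = (x : ℂ) + (y : ℂ) * ω3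

lemma ω3_re : ω3.re = -1 / 2 := by simp [ω3]

lemma ω3_im : ω3.im = Real.sqrt 3 / 2 := by simp [ω3]

lemma ω3_mul_self : ω3 * ω3 = -1 - ω3 := by
  have h : (Real.sqrt 3 : ℂ) ^ 2 = 3 := mod_cast Real.sq_sqrt (by norm_num : (0:ℝ) ≤ 3)
  unfold ω3
  linear_combination (-1/4 : ℂ) * h + (Real.sqrt 3 : ℂ) ^ 2 / 4 * Complex.I_sq

lemma normSq_three_add_four_mul_ω3 : Complex.normSq (3 + 4 * ω3) = 13 := by
  have h : Real.sqrt 3 * Real.sqrt 3 = 3 := Real.mul_self_sqrt (by norm_num)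
  have hre : (3 + 4 * ω3).re = 1 := by norm_num [ω3_re]
  have him : (3 + 4 * ω3).im = 4 * (Real.sqrt 3 / 2) := by simp [ω3_im]
  rw [Complex.normSq_apply, hre, him]
  linear_combination 4 * h

noncomputable def eisOf (p : ℤ × ℤ) : ℂ := p.1 + p.2 * ω3

lemma isEisenstein_iff {z : ℂ} : IsEisenstein z ↔ ∃ p, eisOf p = z := by
  simp [IsEisenstein, eisOf, eq_comm]

lemma eisOf_injective : Function.Injective eisOf := by
  rintro ⟨a, b⟩ ⟨c, d⟩ h
  have hsqrt : Real.sqrt 3 ≠ 0 := by positivity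
  have hbd : b = d := by simpa [eisOf, ω3_im, hsqrt] using congrArg Complex.im h
  subst hbd
  simpa [eisOf] using h

lemma eisOf_sub (p q : ℤ × ℤ) : eisOf (p - q) = eisOf p - eisOf q := by
  simp only [eisOf, Prod.fst_sub, Prod.snd_sub, Int.cast_sub]
  ring

lemma eisOf_mul (p q : ℤ × ℤ) :
    eisOf p * eisOf q = eisOf (p.1 * q.1 - p.2 * q.2, p.1 * q.2 + p.2 * q.1 - p.2 * q.2) := by
  simp only [eisOf]
  push_cast
  linear_combination (p.2 * q.2 : ℂ) * ω3_mul_self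

def EisDvd (b z : ℂ) : Prop := ∃ q, IsEisenstein q ∧ z = b * q

def residue13 (p : ℤ × ℤ) : ZMod 13 := p.1 + 9 * p.2

lemma eisDvd_eisOf_iff (p : ℤ × ℤ) : EisDvd (3 + 4 * ω3) (eisOf p) ↔ residue13 p = 0 := by
  have hB : 3 + 4 * ω3 = eisOf (3, 4) := by simp [eisOf]
  obtain ⟨x, y⟩ := p
  simp only [EisDvd, hB, isEisenstein_iff, residue13]
  constructor
  · rintro ⟨_, ⟨⟨c, d⟩, rfl⟩, h⟩
    rw [eisOf_mul, eisOf_injective.eq_iff, Prod.mk.injEq] at h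
    obtain ⟨rfl, rfl⟩ := h
    have h13 : (13 : ZMod 13) = 0 := rfl
    push_cast
    linear_combination (3 * c - d : ZMod 13) * h13
  · intro h
    obtain ⟨k, hk⟩ := (ZMod.intCast_zmod_eq_zero_iff_dvd (x + 9 * y) 13).mp (by push_cast; exact h)
    refine ⟨_, ⟨(y - k, 3 * y - 4 * k), rfl⟩, ?_⟩
    rw [eisOf_mul]
    congr 1
    ext <;> push_cast at hk ⊢ <;> omega

lemma eisDvd_eisOf_sub_iff (p p' : ℤ × ℤ) :
    EisDvd (3 + 4 * ω3) (eisOf p - eisOf p') ↔ residue13 p = residue13 p' := by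
  rw [← eisOf_sub, eisDvd_eisOf_iff, ← sub_eq_zero (a := residue13 p)]
  simp only [residue13, Prod.fst_sub, Prod.snd_sub, Int.cast_sub]
  ring_nf

lemma existsUnique_eisDvd_sub_of_bijOn {S : Finset (ℤ × ℤ)}
    (hS : Set.BijOn residue13 S Set.univ) {z : ℂ} (hz : IsEisenstein z) :
    ∃! d, d ∈ eisOf '' S ∧ EisDvd (3 + 4 * ω3) (z - d) := by
  obtain ⟨p, rfl⟩ := isEisenstein_iff.mp hz
  obtain ⟨p', hp', hres⟩ := hS.surjOn (Set.mem_univ (residue13 p))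
  refine ⟨eisOf p', ⟨⟨p', hp', rfl⟩, (eisDvd_eisOf_sub_iff p p').mpr hres.symm⟩, ?_⟩
  rintro _ ⟨⟨p'', hp'', rfl⟩, hdvd⟩
  rw [eisDvd_eisOf_sub_iff] at hdvd
  rw [hS.injOn hp'' hp' (hdvd.symm.trans hres.symm)]

def digitCoords : Finset (ℤ × ℤ) :=
  {(0, 0), (1, 0), (-1, 0), (2, 0), (-2, 0), (1, 1), (-1, -1), (2, 2), (-2, -2),
    (0, 1), (0, -1), (0, 2), (0, -2)}

lemma digitSet_eq_image_digitCoords :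
    ({0, 1, -1, 2, -2, ω6, -ω6, 2 * ω6, -(2 * ω6), ω3, -ω3, 2 * ω3, -(2 * ω3)} : Set ℂ) =
      eisOf '' digitCoords := by
  simp only [digitCoords, Finset.coe_insert, Finset.coe_singleton, Set.image_insert_eq,
    Set.image_singleton]
  simp only [eisOf, ω6]
  push_cast
  ring_nf

lemma residue13_bijOn_digitCoords : Set.BijOn residue13 digitCoords Set.univ := by
  refine ⟨Set.mapsTo_univ _ _, ?_, fun r _ => ?_⟩
  · simp only [Set.InjOn, Finset.mem_coe]
    decide
  · simp only [Set.mem_image, Finset.mem_coe]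
    revert r
    decide

/-- B = 1 + 2√3·i equals the Eisenstein integer 3 + 4ω₃ (= 4ω₆ − 1), has norm
13, and D = {0, ±1, ±2, ±ω₆, ±2ω₆, ±ω₃, ±2ω₃} is a complete residue system
modulo B in the Eisenstein integers. -/
theorem eisenstein_R13_crs :
    ((1 : ℂ) + 2 * Real.sqrt 3 * Complex.I = 3 + 4 * ω3) ∧
    Complex.normSq (3 + 4 * ω3) = 13 ∧
    (∀ z : ℂ, IsEisenstein z → ∃! d : ℂ,
      d ∈ ({0, 1, -1, 2, -2, ω6, -ω6, 2 * ω6, -(2 * ω6),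
            ω3, -ω3, 2 * ω3, -(2 * ω3)} : Set ℂ) ∧
        ∃ q : ℂ, IsEisenstein q ∧ z - d = (3 + 4 * ω3) * q) := by
  refine ⟨by unfold ω3; ring, normSq_three_add_four_mul_ω3, fun z hz => ?_⟩
  rw [digitSet_eq_image_digitCoords]
  exact existsUnique_eisDvd_sub_of_bijOn residue13_bijOn_digitCoords hz
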